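/- arXiv:1005.3470 — 6 statements merged into one kernel-verified Lean document; each statement's English description precedes it below -/
import Mathlib

section
/- Let G(V,A) be a finite directed graph with a fixed source s and target u, where removal of each node v is an independent Bernoulli event with probability γ(v) and τ ≡ 1. Suppose γ₋ and γ agree on all nodes except a single node z, where γ₋(z) ≤ γ(z). Then the probability that u is ultimately infected satisfies P_{γ₋}(u infected) ≥ P_γ(u infected). Moreover, writing F_z for the event that the set of removed nodes contains a z-vital s–u cut and F_{z̄} for the event that it contains an s–u cut not requiring z, the probability of non-infection decomposes as P(F_z) + P(F_{z̄}) with P(F_z) = c₁·γ(z) for a constant c₁ independent of γ(z) and P(F_{z̄}) independent of γ(z). -/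
open Finset

/-- A full assignment of random coins for the epidemic: initial-infection coins,
removal coins, and per-(ordered-)edge transmission coins. -/
abbrev Coins (V : Type*) := (V → Bool) × (V → Bool) × (V → V → Bool)

variable {V : Type*} [Fintype V] [DecidableEq V]

/-- Probability weight of a coin outcome `ω` under induction probabilities `σ`,
removal probabilities `γ` and transmission probabilities `τ`. -/
def coinWeight (σ γ : V → ℝ) (τ : V → V → ℝ) (ω : Coins V) : ℝ :=
  (∏ v, if ω.1 v then σ v else 1 - σ v) *
  (∏ v, if ω.2.1 v then γ v else 1 - γ v) *
  ∏ u, ∏ v, if ω.2.2 u v then τ u v else 1 - τ u v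

/-- One step of the discrete-time SIR process: state is `(I, R)`.
An infected node, unless removed (removal coin `true`), transmits to each
susceptible out-neighbour whose transmission coin is `true`; then it recovers. -/
def sirStep (A : V → V → Bool) (ω : Coins V) (p : Finset V × Finset V) :
    Finset V × Finset V :=
  (univ.filter (fun v => v ∉ p.1 ∧ v ∉ p.2 ∧
      ∃ u ∈ p.1, ω.2.1 u = false ∧ A u v = true ∧ ω.2.2 u v = true),
   p.2 ∪ p.1)

/-- The discrete-time SIR process `(I_t, R_t)`; susceptibles are the complement. -/
def sirProc (A : V → V → Bool) (ω : Coins V) : ℕ → Finset V × Finset V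
  | 0 => (univ.filter (fun v => ω.1 v = true), ∅)
  | t + 1 => sirStep A ω (sirProc A ω t)

/-- The set of ever-infected nodes (the epidemic is stationary by time `n = |V|`). -/
def everInf (A : V → V → Bool) (ω : Coins V) : Finset V :=
  (sirProc A ω (Fintype.card V)).1 ∪ (sirProc A ω (Fintype.card V)).2

/-- The mean final extent `E(|R_n|)` of the SIR epidemic. -/
def meanExtent (A : V → V → Bool) (σ γ : V → ℝ) (τ : V → V → ℝ) : ℝ :=
  ∑ ω : Coins V, coinWeight σ γ τ ω * ((everInf A ω).card : ℝ)

/-- The probability that node `u` is ultimately infected. -/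
def probInf (A : V → V → Bool) (σ γ : V → ℝ) (τ : V → V → ℝ) (u : V) : ℝ :=
  ∑ ω : Coins V, coinWeight σ γ τ ω * (if u ∈ everInf A ω then 1 else 0)

/-- A directed path (walk) from `s` to `u` in the graph given by `A`, as a list of
visited nodes. -/
def isPath {V : Type*} (A : V → V → Bool) (s u : V) (l : List V) : Prop :=
  l.Chain' (fun x y => A x y = true) ∧ l.head? = some s ∧ l.getLast? = some u

/-- `C` is an `s`–`u` cut: every directed path from `s` to `u` meets `C` among its
transmitting nodes (all nodes of the path except the final node `u`). -/
def isCut {V : Type*} [DecidableEq V] (A : V → V → Bool) (s u : V) (C : Finset V) : Prop :=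
  ∀ l : List V, isPath A s u l → ∃ v ∈ l.dropLast, v ∈ C

/-- A cut `C` is `z`-vital if `z ∈ C` and excising `z` destroys the cut. -/
def zVital {V : Type*} [DecidableEq V] (A : V → V → Bool) (s u z : V) (C : Finset V) : Prop :=
  isCut A s u C ∧ z ∈ C ∧ ¬ isCut A s u (C.erase z)

variable {V : Type*} [Fintype V] [DecidableEq V]

/-- The set of nodes marked removed by the coins `ω`. -/
def removedSet (ω : Coins V) : Finset V := Finset.univ.filter (fun v => ω.2.1 v = true)

attribute [local instance] Classical.propDecidable

/-- Probability of an event `E` (a predicate on coins) when the epidemic starts at the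
single source `s`, all transmissions have probability `1`, and removals have
probabilities `g`. -/
noncomputable def prEvent (s : V) (g : V → ℝ) (E : Coins V → Prop) : ℝ :=
  ∑ ω : Coins V, coinWeight (fun v => if v = s then 1 else 0) g (fun _ _ => 1) ω *
    (if E ω then 1 else 0)

/-- Event `F_z`: the removed nodes form a `z`-vital `s`–`u` cut (they cut, but no
longer cut once `z` is excised). -/
def Fz (A : V → V → Bool) (s u z : V) (ω : Coins V) : Prop :=
  isCut A s u (removedSet ω) ∧ ¬ isCut A s u ((removedSet ω).erase z)

/-- Event `F_z̄`: the removed nodes contain an `s`–`u` cut not requiring `z`. -/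
def Fzbar (A : V → V → Bool) (s u z : V) (ω : Coins V) : Prop :=
  isCut A s u ((removedSet ω).erase z)

/-!
When every transmission succeeds and `s` is the only initial infective, an outcome of positive
weight is determined by its removal coins, and infection spreads one edge per step along paths
whose transmitting nodes are not removed. Hence `u` escapes infection exactly when the removed
nodes form an `s`–`u` cut, and such a cut either survives excising `z` (`F_z̄`) or does not
(`F_z`, which forces `z` to be removed). The weight of an outcome is affine in `γ z`, so
`P(F_z)` is `γ z` times its value at `γ z = 1`, while `P(F_z̄)` is unchanged by toggling the
coin of `z` and so does not depend on `γ z`. Monotonicity follows from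
`P(u infected) = 1 - c₁ γ z - c₂` with `c₁ ≥ 0`.
-/

open Function

section Dynamics

variable (A : V → V → Bool) (ω : Coins V)

def touched (t : ℕ) : Finset V := (sirProc A ω t).1 ∪ (sirProc A ω t).2

variable {A ω}

lemma mem_fst_sirProc_succ {t : ℕ} {v : V} :
    v ∈ (sirProc A ω (t + 1)).1 ↔ v ∉ touched A ω t ∧
      ∃ w ∈ (sirProc A ω t).1, ω.2.1 w = false ∧ A w v = true ∧ ω.2.2 w v = true := by
  simp [sirProc, sirStep, touched, and_assoc]

lemma touched_succ (t : ℕ) :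
    touched A ω (t + 1) = touched A ω t ∪ (sirProc A ω (t + 1)).1 := by
  ext v
  simp only [touched, sirProc, sirStep, mem_union]
  tauto

lemma touched_mono : Monotone (touched A ω) :=
  monotone_nat_of_le_succ fun t => by rw [touched_succ]; exact subset_union_left

lemma mem_touched_iff {t : ℕ} {v : V} : v ∈ touched A ω t ↔ ∃ t' ≤ t, v ∈ (sirProc A ω t').1 := by
  induction t with
  | zero => simp [touched, sirProc]
  | succ t ih =>
    rw [touched_succ, mem_union, ih]
    constructor
    · rintro (⟨t', ht', hv⟩ | hv)
      · exact ⟨t', by omega, hv⟩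
      · exact ⟨t + 1, le_rfl, hv⟩
    · rintro ⟨t', ht', hv⟩
      rcases Nat.lt_or_eq_of_le ht' with ht' | rfl
      · exact Or.inl ⟨t', by omega, hv⟩
      · exact Or.inr hv

lemma sirStep_eq_self_of_fst_eq_empty {p : Finset V × Finset V} (h : p.1 = ∅) :
    sirStep A ω p = p := by
  ext v
  · simp [sirStep, h]
  · simp [sirStep, h]

/-- Each time step either finds the epidemic over or touches a new node, so it is over by
time `|V|`. -/
lemma fst_sirProc_card_eq_empty : (sirProc A ω (Fintype.card V)).1 = ∅ := by
  have key : ∀ t, (sirProc A ω t).1 = ∅ ∨ t + 1 ≤ (touched A ω t).card := by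
    intro t
    induction t with
    | zero =>
      rcases (sirProc A ω 0).1.eq_empty_or_nonempty with h | h
      · exact Or.inl h
      · exact Or.inr (card_pos.2 (h.mono subset_union_left))
    | succ t ih =>
      rcases (sirProc A ω (t + 1)).1.eq_empty_or_nonempty with h | ⟨v, hv⟩
      · exact Or.inl h
      refine Or.inr ?_
      have hI : (sirProc A ω t).1 ≠ ∅ := by
        rintro hI
        rw [sirProc, sirStep_eq_self_of_fst_eq_empty hI, hI] at hv
        simp at hv
      have hv' : v ∈ touched A ω (t + 1) := by
        rw [touched_succ]
        exact Finset.mem_union_right _ hv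
      have hnew : touched A ω t ⊂ touched A ω (t + 1) :=
        (Finset.ssubset_iff_of_subset (touched_mono t.le_succ)).2
          ⟨v, hv', (mem_fst_sirProc_succ.1 hv).1⟩
      have := card_lt_card hnew
      have := ih.resolve_left hI
      omega
  exact (key _).resolve_right fun h => by have := card_le_univ (touched A ω (Fintype.card V)); omega

lemma sirProc_card_add (k : ℕ) :
    sirProc A ω (Fintype.card V + k) = sirProc A ω (Fintype.card V) := by
  induction k with
  | zero => rfl
  | succ k ih =>
    rw [← add_assoc, sirProc, ih, sirStep_eq_self_of_fst_eq_empty fst_sirProc_card_eq_empty]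

lemma touched_subset_everInf (t : ℕ) : touched A ω t ⊆ everInf A ω := by
  rcases le_total t (Fintype.card V) with h | h
  · exact touched_mono h
  · obtain ⟨k, rfl⟩ := Nat.exists_eq_add_of_le h
    rw [touched, sirProc_card_add]
    rfl

end Dynamics

section Paths

variable {V : Type*} {A : V → V → Bool} {C : Finset V} {s v w : V} {l : List V}

def IsOpenPath (A : V → V → Bool) (C : Finset V) (s v : V) (l : List V) : Prop :=
  isPath A s v l ∧ ∀ x ∈ l.dropLast, x ∉ C

lemma isCut_iff_not_exists_isOpenPath [DecidableEq V] :
    isCut A s v C ↔ ¬ ∃ l, IsOpenPath A C s v l := by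
  simp [isCut, IsOpenPath]

lemma isCut.mono [DecidableEq V] {D : Finset V} (h : isCut A s v C) (hCD : C ⊆ D) :
    isCut A s v D := fun l hl =>
  (h l hl).imp fun _ hx => ⟨hx.1, hCD hx.2⟩

lemma isOpenPath_singleton : IsOpenPath A C s s [s] :=
  ⟨⟨List.isChain_singleton s, rfl, rfl⟩, by simp⟩

lemma IsOpenPath.concat (h : IsOpenPath A C s w l) (hw : w ∉ C) (hA : A w v = true) :
    IsOpenPath A C s v (l ++ [v]) := by
  obtain ⟨⟨hchain, hhead, hlast⟩, hopen⟩ := h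
  obtain ⟨l, rfl⟩ := List.getLast?_eq_some_iff.1 hlast
  refine ⟨⟨List.isChain_append.2 ⟨hchain, List.isChain_singleton v, ?_⟩, ?_, ?_⟩, ?_⟩
  · simpa using hA
  · simpa using hhead
  · simp
  · simp only [List.dropLast_concat, List.mem_append, List.mem_singleton]
    rintro x (hx | rfl)
    exacts [hopen x (by simpa using hx), hw]

end Paths

section Reachability

lemma mem_removedSet {V : Type*} [Fintype V] {ω : Coins V} {v : V} :
    v ∈ removedSet ω ↔ ω.2.1 v = true := by
  simp [removedSet]

variable {A : V → V → Bool} {ω : Coins V} {s : V}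

lemma exists_isOpenPath_of_mem_fst_sirProc (hinit : ∀ v, ω.1 v = true → v = s) {t : ℕ} {v : V}
    (hv : v ∈ (sirProc A ω t).1) : ∃ l, IsOpenPath A (removedSet ω) s v l := by
  induction t generalizing v with
  | zero =>
    obtain rfl : v = s := hinit v (by simpa [sirProc] using hv)
    exact ⟨_, isOpenPath_singleton⟩
  | succ t ih =>
    obtain ⟨-, w, hw, hopen, hA, -⟩ := mem_fst_sirProc_succ.1 hv
    obtain ⟨l, hl⟩ := ih hw
    exact ⟨_, hl.concat (by simpa [mem_removedSet] using hopen) hA⟩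

lemma mem_touched_succ_of_mem_touched (htrans : ∀ x y, ω.2.2 x y = true) {t : ℕ} {w v : V}
    (hw : w ∈ touched A ω t) (hopen : w ∉ removedSet ω) (hA : A w v = true) :
    v ∈ touched A ω (t + 1) := by
  obtain ⟨t', ht', hw⟩ := mem_touched_iff.1 hw
  refine touched_mono (Nat.succ_le_succ ht') ?_
  by_cases hv : v ∈ touched A ω t'
  · exact touched_mono t'.le_succ hv
  · rw [touched_succ]
    refine Finset.mem_union_right _ (mem_fst_sirProc_succ.2 ⟨hv, w, hw, ?_, hA, htrans w v⟩)
    simpa [mem_removedSet] using hopen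

lemma getLast_mem_touched (htrans : ∀ x y, ω.2.2 x y = true) :
    ∀ {l : List V} {x v : V} {t : ℕ}, (x :: l).IsChain (fun a b => A a b = true) →
      (∀ y ∈ (x :: l).dropLast, y ∉ removedSet ω) → (x :: l).getLast? = some v →
      x ∈ touched A ω t → v ∈ touched A ω (t + l.length)
  | [], x, v, t, _, _, hlast, hx => by
    obtain rfl : x = v := by simpa using hlast
    simpa using hx
  | y :: l, x, v, t, hchain, hopen, hlast, hx => by
    rw [List.isChain_cons_cons] at hchain
    rw [List.dropLast_cons_cons, List.forall_mem_cons] at hopen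
    rw [List.getLast?_cons_cons] at hlast
    have hy := mem_touched_succ_of_mem_touched htrans hx hopen.1 hchain.1
    simpa [add_assoc, add_comm 1] using getLast_mem_touched htrans hchain.2 hopen.2 hlast hy

lemma mem_everInf_iff_exists_isOpenPath (hinit : ∀ v, ω.1 v = true ↔ v = s)
    (htrans : ∀ x y, ω.2.2 x y = true) {v : V} :
    v ∈ everInf A ω ↔ ∃ l, IsOpenPath A (removedSet ω) s v l := by
  constructor
  · intro hv
    obtain ⟨t, -, hv⟩ := mem_touched_iff.1 hv
    exact exists_isOpenPath_of_mem_fst_sirProc (fun v => (hinit v).1) hv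
  · rintro ⟨l, ⟨hchain, hhead, hlast⟩, hopen⟩
    obtain ⟨l, rfl⟩ := List.head?_eq_some_iff.1 hhead
    have hs : s ∈ touched A ω 0 := Finset.mem_union_left _ (by simp [sirProc, hinit])
    exact touched_subset_everInf _ (getLast_mem_touched htrans hchain hopen hlast hs)

lemma notMem_everInf_iff_isCut (hinit : ∀ v, ω.1 v = true ↔ v = s)
    (htrans : ∀ x y, ω.2.2 x y = true) {u : V} :
    u ∉ everInf A ω ↔ isCut A s u (removedSet ω) := by
  rw [mem_everInf_iff_exists_isOpenPath hinit htrans, isCut_iff_not_exists_isOpenPath]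

end Reachability

section Probability

lemma sum_bernoulli_prod {ι : Type*} [Fintype ι] [DecidableEq ι] (p : ι → ℝ) :
    ∑ r : ι → Bool, ∏ i, (if r i then p i else 1 - p i) = 1 := by
  rw [← Fintype.prod_sum fun i (b : Bool) => if b then p i else 1 - p i]
  simp

lemma coinWeight_mk {V : Type*} [Fintype V] (σ γ : V → ℝ) (τ : V → V → ℝ) (a r : V → Bool)
    (t : V → V → Bool) :
    coinWeight σ γ τ (a, r, t) = (∏ v, if a v then σ v else 1 - σ v) *
      (∏ v, if r v then γ v else 1 - γ v) * ∏ x, ∏ y, if t x y then τ x y else 1 - τ x y :=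
  rfl

lemma sum_coinWeight (σ γ : V → ℝ) (τ : V → V → ℝ) : ∑ ω, coinWeight σ γ τ ω = 1 := by
  have hτ : ∑ t : V → V → Bool, ∏ x, ∏ y, (if t x y then τ x y else 1 - τ x y) = 1 := by
    rw [← Fintype.prod_sum fun x (t : V → Bool) => ∏ y, if t y then τ x y else 1 - τ x y]
    simp [sum_bernoulli_prod]
  calc ∑ ω, coinWeight σ γ τ ω
      = (∑ a : V → Bool, ∏ v, if a v then σ v else 1 - σ v) *
        (∑ r : V → Bool, ∏ v, if r v then γ v else 1 - γ v) *
        ∑ t : V → V → Bool, ∏ x, ∏ y, (if t x y then τ x y else 1 - τ x y) := by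
        simp only [Fintype.sum_prod_type, coinWeight_mk, ← Finset.mul_sum, ← Finset.sum_mul]
    _ = 1 := by rw [hτ, sum_bernoulli_prod, sum_bernoulli_prod, one_mul, one_mul]

variable {s z : V} {g γ : V → ℝ} {E E' : Coins V → Prop}

lemma source_of_coinWeight_ne_zero {ω : Coins V}
    (h : coinWeight (fun v => if v = s then 1 else 0) g (fun _ _ => 1) ω ≠ 0) :
    (∀ v, ω.1 v = true ↔ v = s) ∧ ∀ x y, ω.2.2 x y = true := by
  obtain ⟨a, r, t⟩ := ω
  rw [coinWeight_mk] at h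
  refine ⟨fun v => ?_, fun x y => ?_⟩
  · by_contra hv
    refine h ?_
    rw [Finset.prod_eq_zero (mem_univ v), zero_mul, zero_mul]
    cases hav : a v <;> by_cases hvs : v = s <;> simp_all
  · by_contra hxy
    refine h ?_
    exact mul_eq_zero_of_right _
      (Finset.prod_eq_zero (mem_univ x) (Finset.prod_eq_zero (mem_univ y) (by simp_all)))

lemma prEvent_congr
    (h : ∀ ω : Coins V, (∀ v, ω.1 v = true ↔ v = s) → (∀ x y, ω.2.2 x y = true) → (E ω ↔ E' ω)) :
    prEvent s g E = prEvent s g E' := by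
  refine Finset.sum_congr rfl fun ω _ => ?_
  by_cases hω : coinWeight (fun v => if v = s then 1 else 0) g (fun _ _ => 1) ω = 0
  · simp [hω]
  · obtain ⟨hinit, htrans⟩ := source_of_coinWeight_ne_zero hω
    simp only [h ω hinit htrans]

lemma prEvent_or (h : ∀ ω, ¬ (E ω ∧ E' ω)) :
    prEvent s g (fun ω => E ω ∨ E' ω) = prEvent s g E + prEvent s g E' := by
  simp only [prEvent, ← Finset.sum_add_distrib, ← mul_add]
  refine Finset.sum_congr rfl fun ω _ => ?_
  have := h ω
  split_ifs <;> simp_all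

lemma probInf_eq_one_sub_prEvent (A : V → V → Bool) (u : V) :
    probInf A (fun v => if v = s then 1 else 0) g (fun _ _ => 1) u =
      1 - prEvent s g (fun ω => u ∉ everInf A ω) := by
  rw [eq_sub_iff_add_eq, probInf, prEvent, ← Finset.sum_add_distrib]
  refine (Finset.sum_congr rfl fun ω _ => ?_).trans
    (sum_coinWeight (fun v => if v = s then 1 else 0) g (fun _ _ => 1))
  by_cases h : u ∈ everInf A ω <;> simp [h]

lemma prEvent_nonneg (hg : ∀ v, 0 ≤ g v ∧ g v ≤ 1) : 0 ≤ prEvent s g E := by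
  have hbern : ∀ (b : Bool) (p : ℝ), 0 ≤ p ∧ p ≤ 1 → 0 ≤ if b then p else 1 - p := by
    rintro (_ | _) p ⟨hp₀, hp₁⟩ <;> simp <;> linarith
  refine Finset.sum_nonneg fun ω _ => mul_nonneg ?_ (by split_ifs <;> norm_num)
  refine mul_nonneg (mul_nonneg ?_ ?_) ?_
  · exact Finset.prod_nonneg fun v _ => hbern _ _ (by dsimp only; split_ifs <;> norm_num)
  · exact Finset.prod_nonneg fun v _ => hbern _ _ (hg v)
  · exact Finset.prod_nonneg fun x _ => Finset.prod_nonneg fun y _ => hbern _ _ (by norm_num)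

lemma prod_bernoulli_update (p : V → ℝ) (r : V → Bool) (z : V) (x : ℝ) :
    (∏ v, if r v then update p z x v else 1 - update p z x v) =
      (if r z then x else 1 - x) * ∏ v ∈ univ.erase z, if r v then p v else 1 - p v := by
  rw [← Finset.mul_prod_erase univ _ (mem_univ z), update_self]
  congr 1
  refine Finset.prod_congr rfl fun v hv => ?_
  rw [update_of_ne (ne_of_mem_erase hv)]

lemma coinWeight_update (σ : V → ℝ) (τ : V → V → ℝ) (x : ℝ) (ω : Coins V) :
    coinWeight σ (update γ z x) τ ω =
      x * coinWeight σ (update γ z 1) τ ω + (1 - x) * coinWeight σ (update γ z 0) τ ω := by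
  obtain ⟨a, r, t⟩ := ω
  simp only [coinWeight_mk, prod_bernoulli_update]
  cases r z <;> simp <;> ring

def flipRemoval {V : Type*} [DecidableEq V] (z : V) (ω : Coins V) : Coins V :=
  (ω.1, update ω.2.1 z (!ω.2.1 z), ω.2.2)

lemma flipRemoval_involutive {V : Type*} [DecidableEq V] (z : V) :
    Involutive (flipRemoval (V := V) z) := by
  rintro ⟨a, r, t⟩
  simp [flipRemoval]

lemma coinWeight_update_one_flipRemoval (σ : V → ℝ) (τ : V → V → ℝ) (ω : Coins V) :
    coinWeight σ (update γ z 1) τ (flipRemoval z ω) = coinWeight σ (update γ z 0) τ ω := by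
  obtain ⟨a, r, t⟩ := ω
  have hrest : ∏ v ∈ univ.erase z, (if update r z (!r z) v then γ v else 1 - γ v) =
      ∏ v ∈ univ.erase z, if r v then γ v else 1 - γ v :=
    Finset.prod_congr rfl fun v hv => by rw [update_of_ne (ne_of_mem_erase hv)]
  simp only [flipRemoval, coinWeight_mk, prod_bernoulli_update, hrest, update_self]
  cases r z <;> simp

lemma prEvent_update (x : ℝ) :
    prEvent s (update γ z x) E =
      x * prEvent s (update γ z 1) E + (1 - x) * prEvent s (update γ z 0) E := by
  simp only [prEvent, coinWeight_update (z := z) _ _ x, Finset.mul_sum, add_mul, mul_assoc,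
    Finset.sum_add_distrib]

lemma prEvent_update_zero_eq_zero (hE : ∀ ω, E ω → z ∈ removedSet ω) :
    prEvent s (update γ z 0) E = 0 := by
  refine Finset.sum_eq_zero fun ω _ => ?_
  by_cases h : E ω
  · obtain ⟨a, r, t⟩ := ω
    have hz : r z = true := mem_removedSet.1 (hE _ h)
    simp [coinWeight_mk, prod_bernoulli_update, hz]
  · simp [h]

lemma prEvent_update_zero_eq_update_one (hE : ∀ ω, E (flipRemoval z ω) ↔ E ω) :
    prEvent s (update γ z 0) E = prEvent s (update γ z 1) E :=
  Fintype.sum_bijective _ (flipRemoval_involutive z).bijective _ _ fun ω => by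
    simp only [coinWeight_update_one_flipRemoval, hE]

lemma prEvent_eq_mul_of_forall_ne (hE : ∀ ω, E ω → z ∈ removedSet ω)
    (hg : ∀ v, v ≠ z → g v = γ v) : prEvent s g E = prEvent s (update γ z 1) E * g z := by
  rw [eq_update_iff.2 ⟨rfl, hg⟩, prEvent_update, prEvent_update_zero_eq_zero hE, update_self]
  ring

lemma prEvent_eq_of_forall_ne (hE : ∀ ω, E (flipRemoval z ω) ↔ E ω)
    (hg : ∀ v, v ≠ z → g v = γ v) : prEvent s g E = prEvent s γ E := by
  conv_rhs => rw [← update_eq_self z γ]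
  rw [eq_update_iff.2 ⟨rfl, hg⟩, prEvent_update, prEvent_update (x := γ z),
    prEvent_update_zero_eq_update_one hE]
  ring

end Probability

section CutEvents

variable {A : V → V → Bool} {s u z : V} {ω : Coins V}

lemma mem_removedSet_of_Fz (h : Fz A s u z ω) : z ∈ removedSet ω := by
  by_contra hz
  exact h.2 (by rw [erase_eq_of_notMem hz]; exact h.1)

lemma isCut_iff_Fz_or_Fzbar :
    isCut A s u (removedSet ω) ↔ Fz A s u z ω ∨ Fzbar A s u z ω := by
  refine ⟨fun h => ?_, ?_⟩
  · by_cases hbar : Fzbar A s u z ω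
    exacts [Or.inr hbar, Or.inl ⟨h, hbar⟩]
  · rintro (h | h)
    exacts [h.1, h.mono (erase_subset z _)]

lemma Fzbar_flipRemoval : Fzbar A s u z (flipRemoval z ω) ↔ Fzbar A s u z ω := by
  have : (removedSet (flipRemoval z ω)).erase z = (removedSet ω).erase z := by
    ext v
    by_cases hv : v = z <;> simp [mem_removedSet, flipRemoval, hv]
  rw [Fzbar, Fzbar, this]

lemma prEvent_notMem_everInf (g : V → ℝ) :
    prEvent s g (fun ω => u ∉ everInf A ω) =
      prEvent s g (Fz A s u z) + prEvent s g (Fzbar A s u z) := by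
  rw [← prEvent_or fun ω h => h.1.2 h.2]
  exact prEvent_congr fun ω hinit htrans =>
    (notMem_everInf_iff_isCut hinit htrans).trans isCut_iff_Fz_or_Fzbar

end CutEvents

theorem sir_single_node_monotone_cut_decomposition_general
    (A : V → V → Bool) (s u z : V) (γm γ : V → ℝ)
    (hagree : ∀ v, v ≠ z → γm v = γ v) (hz : γm z ≤ γ z)
    (hγ : ∀ v, 0 ≤ γ v ∧ γ v ≤ 1) :
    probInf A (fun v => if v = s then 1 else 0) γm (fun _ _ => 1) u ≥
      probInf A (fun v => if v = s then 1 else 0) γ (fun _ _ => 1) u ∧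
    prEvent s γ (fun ω => u ∉ everInf A ω) =
      prEvent s γ (Fz A s u z) + prEvent s γ (Fzbar A s u z) ∧
    ∃ c₁ c₂ : ℝ, ∀ g : V → ℝ, (∀ v, v ≠ z → g v = γ v) →
      prEvent s g (Fz A s u z) = c₁ * g z ∧ prEvent s g (Fzbar A s u z) = c₂ := by
  set c₁ := prEvent s (update γ z 1) (Fz A s u z)
  set c₂ := prEvent s γ (Fzbar A s u z)
  have hFz : ∀ g : V → ℝ, (∀ v, v ≠ z → g v = γ v) → prEvent s g (Fz A s u z) = c₁ * g z :=
    fun g hg => prEvent_eq_mul_of_forall_ne (fun _ => mem_removedSet_of_Fz) hg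
  have hFzbar : ∀ g : V → ℝ, (∀ v, v ≠ z → g v = γ v) → prEvent s g (Fzbar A s u z) = c₂ :=
    fun g hg => prEvent_eq_of_forall_ne (fun _ => Fzbar_flipRemoval) hg
  have hc₁ : 0 ≤ c₁ := prEvent_nonneg fun v => by
    rcases eq_or_ne v z with rfl | hv
    · simp
    · simpa [hv] using hγ v
  refine ⟨?_, prEvent_notMem_everInf γ, c₁, c₂, fun g hg => ⟨hFz g hg, hFzbar g hg⟩⟩
  rw [ge_iff_le, probInf_eq_one_sub_prEvent, probInf_eq_one_sub_prEvent,
    prEvent_notMem_everInf (z := z), prEvent_notMem_everInf (z := z), hFz γm hagree,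
    hFz γ fun _ _ => rfl, hFzbar γm hagree, hFzbar γ fun _ _ => rfl]
  linarith [mul_le_mul_of_nonneg_left hz hc₁]

/-- Single-node monotonicity with cut decomposition: with `τ ≡ 1`,
source `s`, and removal probabilities `γ₋ ≤ γ` differing only at the node `z`, the
probability that `u` is ultimately infected is at least as large under `γ₋`; moreover
the probability of non-infection decomposes as `P(F_z) + P(F_z̄)`, where
`P(F_z) = c₁ · γ(z)` with `c₁` independent of the value of the removal probability at
`z`, and `P(F_z̄)` is independent of that value. -/
theorem sir_single_node_monotone_cut_decomposition
    (A : V → V → Bool) (s u z : V) (γm γ : V → ℝ)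
    (hagree : ∀ v, v ≠ z → γm v = γ v) (hz : γm z ≤ γ z)
    (hγm : ∀ v, 0 ≤ γm v ∧ γm v ≤ 1) (hγ : ∀ v, 0 ≤ γ v ∧ γ v ≤ 1) :
    probInf A (fun v => if v = s then 1 else 0) γm (fun _ _ => 1) u ≥
      probInf A (fun v => if v = s then 1 else 0) γ (fun _ _ => 1) u ∧
    prEvent s γ (fun ω => u ∉ everInf A ω) =
      prEvent s γ (Fz A s u z) + prEvent s γ (Fzbar A s u z) ∧
    ∃ c₁ c₂ : ℝ, ∀ g : V → ℝ, (∀ v, v ≠ z → g v = γ v) →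
      prEvent s g (Fz A s u z) = c₁ * g z ∧ prEvent s g (Fzbar A s u z) = c₂ :=
  sir_single_node_monotone_cut_decomposition_general A s u z γm γ hagree hz hγ
end

section
/- (Lemma: γ-monotonicity of infection probability.) Consider two discrete-time SIR epidemics on the same directed graph G, both originating at a single source node s and both with transmission probability 1 on every edge, with removal probability functions γ₋ and γ satisfying γ₋(v) ≤ γ(v) for all nodes v. Then for every node u, the probability that u is ultimately infected is at least as large under γ₋ as under γ: P_{γ₋}(u ∈ R_n) ≥ P_γ(u ∈ R_n). -/
/-!
Once `s` is the sure source and every transmission coin is `true`, the only randomness left is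
the vector `r` of removal coins, and the ever-infected set consists of the nodes reachable from `s`
along edges leaving non-removed nodes. This set shrinks when more coins say "removed", so the
infection probability of `u` is the expectation of an antitone function of `r` under independent
Bernoulli coins with parameters `γ`. Such an expectation is affine in each parameter with
nonpositive slope, so lowering the parameters one node at a time can only increase it.
-/

open Finset

variable {V : Type*} [Fintype V] [DecidableEq V]

section Bernoulli

variable {ι : Type*} [Fintype ι]

def bernoulliWeight (p : ι → ℝ) (r : ι → Bool) : ℝ :=
  ∏ i, if r i then p i else 1 - p i

lemma bernoulliWeight_nonneg {p : ι → ℝ} (hp₀ : ∀ i, 0 ≤ p i) (hp₁ : ∀ i, p i ≤ 1)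
    (r : ι → Bool) : 0 ≤ bernoulliWeight p r :=
  prod_nonneg fun i _ => by split <;> linarith [hp₀ i, hp₁ i]

lemma bernoulliWeight_boole (b r : ι → Bool) :
    bernoulliWeight (fun i => if b i then 1 else 0) r = if r = b then 1 else 0 := by
  have factor : ∀ i, ((if r i then (if b i then 1 else 0) else 1 - if b i then 1 else 0) : ℝ) =
      if r i = b i then 1 else 0 := fun i => by cases r i <;> cases b i <;> norm_num
  simp only [bernoulliWeight, factor, Fintype.prod_boole, funext_iff]

lemma coinWeight_eq_bernoulliWeight (σ γ : ι → ℝ) (τ : ι → ι → ℝ) (ω : Coins ι) :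
    coinWeight σ γ τ ω =
      bernoulliWeight σ ω.1 * bernoulliWeight γ ω.2.1 * ∏ i, bernoulliWeight (τ i) (ω.2.2 i) :=
  rfl

variable [DecidableEq ι]

def bernoulliExpect (p : ι → ℝ) (f : (ι → Bool) → ℝ) : ℝ :=
  ∑ r, bernoulliWeight p r * f r

lemma bernoulliWeight_update_funSplitAt_symm (p : ι → ℝ) (a : ι) (x : ℝ) (b : Bool)
    (q : {i // i ≠ a} → Bool) :
    bernoulliWeight (Function.update p a x) ((Equiv.funSplitAt a Bool).symm (b, q)) =
      (if b then x else 1 - x) * bernoulliWeight (fun i : {i // i ≠ a} => p i) q := by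
  rw [bernoulliWeight, Fintype.prod_eq_mul_prod_subtype_ne _ a, bernoulliWeight]
  congr 1
  · simp
  · exact prod_congr rfl fun i _ => by simp [i.2]

lemma bernoulliExpect_update (p : ι → ℝ) (a : ι) (x : ℝ) (f : (ι → Bool) → ℝ) :
    bernoulliExpect (Function.update p a x) f =
      ∑ q : {i // i ≠ a} → Bool, bernoulliWeight (fun i : {i // i ≠ a} => p i) q *
        (x * f ((Equiv.funSplitAt a Bool).symm (true, q)) +
          (1 - x) * f ((Equiv.funSplitAt a Bool).symm (false, q))) := by
  rw [bernoulliExpect, ← (Equiv.funSplitAt a Bool).symm.sum_comp, Fintype.sum_prod_type_right]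
  refine sum_congr rfl fun q _ => ?_
  simp only [Fintype.sum_bool, bernoulliWeight_update_funSplitAt_symm, if_true,
    Bool.false_eq_true, if_false]
  ring

lemma bernoulliExpect_update_le_update {f : (ι → Bool) → ℝ} (hf : Antitone f) {p : ι → ℝ}
    (hp₀ : ∀ i, 0 ≤ p i) (hp₁ : ∀ i, p i ≤ 1) (a : ι) {x y : ℝ} (hxy : x ≤ y) :
    bernoulliExpect (Function.update p a y) f ≤ bernoulliExpect (Function.update p a x) f := by
  rw [bernoulliExpect_update, bernoulliExpect_update]
  refine sum_le_sum fun q _ => mul_le_mul_of_nonneg_left ?_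
    (bernoulliWeight_nonneg (fun i : {i // i ≠ a} => hp₀ i) (fun i => hp₁ i) q)
  have hfq : f ((Equiv.funSplitAt a Bool).symm (true, q)) ≤
      f ((Equiv.funSplitAt a Bool).symm (false, q)) := hf fun i => by
    by_cases hi : i = a <;> simp [hi]
  nlinarith

lemma bernoulliExpect_antitone {f : (ι → Bool) → ℝ} (hf : Antitone f) {p q : ι → ℝ}
    (hp₀ : ∀ i, 0 ≤ p i) (hpq : p ≤ q) (hq₁ : ∀ i, q i ≤ 1) :
    bernoulliExpect q f ≤ bernoulliExpect p f := by
  suffices h : ∀ S : Finset ι, bernoulliExpect q f ≤ bernoulliExpect (S.piecewise p q) f by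
    simpa using h univ
  intro S
  induction S using Finset.induction_on with
  | empty => simp
  | insert a S ha ih =>
    set g := S.piecewise p q
    have hg₀ : ∀ i, 0 ≤ g i := fun i =>
      le_piecewise_of_le_of_le S (fun j => hp₀ j) (fun j => (hp₀ j).trans (hpq j)) i
    have hg₁ : ∀ i, g i ≤ 1 := fun i =>
      piecewise_le_of_le_of_le S (fun j => (hpq j).trans (hq₁ j)) (fun j => hq₁ j) i
    have hga : Function.update g a (q a) = g := by
      rw [← S.piecewise_eq_of_notMem p q ha]; exact Function.update_eq_self a g
    calc bernoulliExpect q f ≤ bernoulliExpect g f := ih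
      _ = bernoulliExpect (Function.update g a (q a)) f := by rw [hga]
      _ ≤ bernoulliExpect (Function.update g a (p a)) f :=
        bernoulliExpect_update_le_update hf hg₀ hg₁ a (hpq a)
      _ = bernoulliExpect ((insert a S).piecewise p q) f := by rw [piecewise_insert]

end Bernoulli

lemma Finset.le_card_of_forall_ssubset_succ {α : Type*} {s : ℕ → Finset α} {t : ℕ}
    (h : ∀ j < t, s j ⊂ s (j + 1)) : t ≤ #(s t) := by
  induction t with
  | zero => exact Nat.zero_le _
  | succ t ih =>
    have := card_lt_card (h t t.lt_succ_self)
    have := ih fun j hj => h j (hj.trans t.lt_succ_self)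
    omega

section SIR

variable (A : V → V → Bool) (ω : Coins V)

def everInfAt (t : ℕ) : Finset V :=
  (sirProc A ω t).1 ∪ (sirProc A ω t).2

lemma everInf_eq_everInfAt : everInf A ω = everInfAt A ω (Fintype.card V) := rfl

variable {A ω}

lemma mem_sirProc_succ_fst {t : ℕ} {v : V} :
    v ∈ (sirProc A ω (t + 1)).1 ↔ v ∉ everInfAt A ω t ∧
      ∃ x ∈ (sirProc A ω t).1, ω.2.1 x = false ∧ A x v = true ∧ ω.2.2 x v = true := by
  simp [sirProc, sirStep, everInfAt, and_assoc]

lemma everInfAt_succ (t : ℕ) :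
    everInfAt A ω (t + 1) = (sirProc A ω (t + 1)).1 ∪ everInfAt A ω t := by
  simp only [everInfAt, sirProc, sirStep, union_comm (sirProc A ω t).2]

lemma disjoint_sirProc_succ_fst_everInfAt (t : ℕ) :
    Disjoint (sirProc A ω (t + 1)).1 (everInfAt A ω t) :=
  disjoint_left.2 fun _ hv => (mem_sirProc_succ_fst.1 hv).1

lemma everInfAt_mono : Monotone (everInfAt A ω) :=
  monotone_nat_of_le_succ fun t => by rw [everInfAt_succ]; exact subset_union_right

lemma exists_mem_sirProc_fst_of_mem_everInfAt {t : ℕ} {v : V} (hv : v ∈ everInfAt A ω t) :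
    ∃ j ≤ t, v ∈ (sirProc A ω j).1 := by
  induction t with
  | zero => simpa [everInfAt, sirProc] using hv
  | succ t ih =>
    rw [everInfAt_succ, mem_union] at hv
    rcases hv with hv | hv
    · exact ⟨t + 1, le_rfl, hv⟩
    · obtain ⟨j, hj, hvj⟩ := ih hv
      exact ⟨j, hj.trans t.le_succ, hvj⟩

lemma everInfAt_succ_eq_iff {t : ℕ} :
    everInfAt A ω (t + 1) = everInfAt A ω t ↔ (sirProc A ω (t + 1)).1 = ∅ := by
  rw [everInfAt_succ, union_eq_right]
  exact ⟨(disjoint_sirProc_succ_fst_everInfAt t).eq_bot_of_le, fun h => h ▸ empty_subset _⟩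

lemma sirProc_succ_fst_eq_empty {t : ℕ} (h : (sirProc A ω t).1 = ∅) :
    (sirProc A ω (t + 1)).1 = ∅ := by
  ext v; simp [mem_sirProc_succ_fst, h]

lemma everInfAt_succ_eq_of_le {t m : ℕ} (h : everInfAt A ω (t + 1) = everInfAt A ω t)
    (htm : t ≤ m) : everInfAt A ω (m + 1) = everInfAt A ω m := by
  rw [everInfAt_succ_eq_iff] at h ⊢
  induction m, htm using Nat.le_induction with
  | base => exact h
  | succ m _ ih => exact sirProc_succ_fst_eq_empty ih

-- Until it stops, the epidemic infects a new node every step, so it stops within `|V|` steps.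
lemma everInfAt_card_succ :
    everInfAt A ω (Fintype.card V + 1) = everInfAt A ω (Fintype.card V) := by
  by_contra hne
  have hgrow : ∀ j < Fintype.card V + 1, everInfAt A ω j ⊂ everInfAt A ω (j + 1) :=
    fun j hj => (everInfAt_mono j.le_succ).ssubset_of_ne fun h =>
      hne (everInfAt_succ_eq_of_le h.symm (Nat.lt_succ_iff.1 hj))
  have := le_card_of_forall_ssubset_succ hgrow
  have := card_le_univ (everInfAt A ω (Fintype.card V + 1))
  omega

lemma mem_everInf_of_transmit {x y : V} (hx : x ∈ everInf A ω) (hxr : ω.2.1 x = false)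
    (hxy : A x y = true) (hτ : ω.2.2 x y = true) : y ∈ everInf A ω := by
  rw [everInf_eq_everInfAt] at hx ⊢
  obtain ⟨j, hj, hxj⟩ := exists_mem_sirProc_fst_of_mem_everInfAt hx
  by_cases hy : y ∈ everInfAt A ω j
  · exact everInfAt_mono hj hy
  · have hy' : y ∈ everInfAt A ω (j + 1) := by
      rw [everInfAt_succ]
      exact mem_union_left _ (mem_sirProc_succ_fst.2 ⟨hy, x, hxj, hxr, hxy, hτ⟩)
    rw [← everInfAt_card_succ]
    exact everInfAt_mono (Nat.succ_le_succ hj) hy'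

lemma everInf_antitone (i : V → Bool) (c : V → V → Bool) :
    Antitone fun r => everInf A (i, r, c) := by
  intro r r' hr
  suffices h : ∀ t, everInfAt A (i, r', c) t ⊆ everInf A (i, r, c) from h _
  intro t
  induction t with
  | zero => exact everInfAt_mono (ω := (i, r, c)) (Nat.zero_le _)
  | succ t ih =>
    rw [everInfAt_succ]
    refine union_subset (fun v hv => ?_) ih
    obtain ⟨-, x, hx, hxr, hxv, hτ⟩ := mem_sirProc_succ_fst.1 hv
    exact mem_everInf_of_transmit (ih (mem_union_left _ hx))
      (Bool.eq_false_of_le_false (hxr ▸ hr x)) hxv hτ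

lemma antitone_ite_mem_everInf (i : V → Bool) (c : V → V → Bool) (u : V) :
    Antitone fun r => if u ∈ everInf A (i, r, c) then (1 : ℝ) else 0 := by
  intro r r' hr
  by_cases hu : u ∈ everInf A (i, r', c)
  · simp [hu, everInf_antitone i c hr hu]
  · simp only [hu, if_false]
    split <;> norm_num

end SIR

lemma probInf_boole (A : V → V → Bool) (b : V → Bool) (γ : V → ℝ) (c : V → V → Bool) (u : V) :
    probInf A (fun v => if b v then 1 else 0) γ (fun x y => if c x y then 1 else 0) u =
      bernoulliExpect γ (fun r => if u ∈ everInf A (b, r, c) then 1 else 0) := by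
  have weight : ∀ ω : Coins V, coinWeight (fun v => if b v then 1 else 0) γ
      (fun x y => if c x y then 1 else 0) ω =
        if ω.1 = b ∧ ω.2.2 = c then bernoulliWeight γ ω.2.1 else 0 := fun ω => by
    simp only [coinWeight_eq_bernoulliWeight, bernoulliWeight_boole, Fintype.prod_boole,
      ← funext_iff]
    split_ifs <;> simp_all
  simp only [probInf, weight, ite_mul, zero_mul, Fintype.sum_prod_type, ite_and,
    Fintype.sum_ite_eq', sum_ite_irrel, sum_const_zero, bernoulliExpect]

/-- **γ-monotonicity lemma.** Two SIR epidemics on the same directed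
graph, both starting at the single source `s` and with transmission probability `1`
on every edge, with removal probabilities `γ₋ ≤ γ` pointwise: every node `u` is at
least as likely to be ultimately infected under `γ₋` as under `γ`. -/
theorem sir_gamma_monotone {V : Type*} [Fintype V] [DecidableEq V]
    (A : V → V → Bool) (s : V) (γm γ : V → ℝ)
    (hγm : ∀ v, 0 ≤ γm v) (hle : ∀ v, γm v ≤ γ v) (hγ : ∀ v, γ v ≤ 1) (u : V) :
    probInf A (fun v => if v = s then 1 else 0) γm (fun _ _ => 1) u ≥
      probInf A (fun v => if v = s then 1 else 0) γ (fun _ _ => 1) u := by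
  have hprob := fun γ => probInf_boole A (fun v => decide (v = s)) γ (fun _ _ => true) u
  simp only [decide_eq_true_eq, if_true] at hprob
  rw [ge_iff_le, hprob, hprob]
  exact bernoulliExpect_antitone (antitone_ite_mem_everInf _ _ u) hγm hle hγ
end

section
/- (Reduction of transmission to removal.) Given a discrete-time SIR epidemic E on graph G(V,A) with transmission probabilities τ and removal probabilities γ starting from source s, construct graph G'' by replacing every edge e=(v,w) with a two-hop path (v,h_e),(h_e,w) through a new helper node h_e, setting all transmission probabilities to 1, removal probability γ̂(h_e) = 1 − τ(e) for helper nodes, and γ̂(v) = γ(v) for original nodes. Then: (a) the probability that an infected v transmits to w in G'' equals τ(v,w); (b) node v ∈ V is infected at time t in E iff it is infected at time 2t in the new epidemic; and (c) the expected number of ultimately infected original (non-helper) nodes in the new epidemic equals the expected final extent E(|R_n|) of E. -/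
open Finset

variable {V : Type*} [Fintype V] [DecidableEq V]

variable {V : Type*} [Fintype V] [DecidableEq V]

/-- The edges of the directed graph given by `A`. -/
abbrev EdgeOf (A : V → V → Bool) := {e : V × V // A e.1 e.2 = true}

/-- Vertices of the reduced graph: original nodes plus one helper node per edge. -/
abbrev HelperV (A : V → V → Bool) := V ⊕ EdgeOf A

/-- Adjacency of the reduced graph: each edge `e = (v,w)` is replaced by the
two-hop path `(v, h_e), (h_e, w)` through the helper node `h_e`. -/
def helperAdj (A : V → V → Bool) : HelperV A → HelperV A → Bool
  | .inl v, .inr e => decide (e.1.1 = v)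
  | .inr e, .inl w => decide (e.1.2 = w)
  | _, _ => false

/-- Removal probabilities on the reduced graph: `γ̂(h_e) = 1 - τ(e)` for helper
nodes, `γ̂(v) = γ(v)` for original nodes. -/
def helperGamma (A : V → V → Bool) (γ : V → ℝ) (τ : V → V → ℝ) : HelperV A → ℝ
  | .inl v => γ v
  | .inr e => 1 - τ e.1.1 e.1.2

/-- The natural coupling of coins: original nodes keep their coins; the helper
`h_e` is removed-before-transmitting iff edge `e` fails to transmit in the original
epidemic; all transmissions in the reduced graph succeed. -/
def liftCoins (A : V → V → Bool) (ω : Coins V) : Coins (HelperV A) :=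
  (fun x => match x with | .inl v => ω.1 v | .inr _ => false,
   fun x => match x with | .inl v => ω.2.1 v | .inr e => ! ω.2.2 e.1.1 e.1.2,
   fun _ _ => true)


/-!
Under the coupling `liftCoins`, the helper `h_e` of an edge `e = (v, w)` survives exactly when
`e` transmits, so the two reduced steps `v → h_e → w` replay one step of the original epidemic:
at time `2t` the reduced epidemic restricted to `V` is the original one at time `t`. The
coupling preserves the law of the coins: the removal coin of `h_e` is Bernoulli `1 - τ e`,
exactly the law of the negated transmission coin of `e`; the remaining coins are either
deterministic or, for non-edges, irrelevant.
-/

section BernWeight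
variable {α : Type*} [Fintype α] [DecidableEq α]

def bernWeight (p : α → ℝ) (f : α → Bool) : ℝ :=
  ∏ a, if f a then p a else 1 - p a

lemma sum_bernWeight_mul_prod (p : α → ℝ) (g : α → Bool → ℝ) :
    ∑ f, bernWeight p f * ∏ a, g a (f a) = ∏ a, (p a * g a true + (1 - p a) * g a false) := by
  simp_rw [bernWeight, ← prod_mul_distrib]
  exact (Fintype.prod_sum fun a b => (if b then p a else 1 - p a) * g a b).symm.trans (by simp)

lemma sum_bernWeight (p : α → ℝ) : ∑ f, bernWeight p f = 1 := by
  simpa using sum_bernWeight_mul_prod p fun _ _ => 1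

lemma sum_bernWeight_mul_apply (p : α → ℝ) (x : α) (φ : Bool → ℝ) :
    ∑ f, bernWeight p f * φ (f x) = p x * φ true + (1 - p x) * φ false := by
  have hφ : ∀ f : α → Bool, ∏ a, (if a = x then φ (f a) else 1) = φ (f x) := fun f =>
    (Fintype.prod_eq_single x fun a ha => if_neg ha).trans (if_pos rfl)
  have h := sum_bernWeight_mul_prod p fun a b => if a = x then φ b else 1
  simp_rw [hφ] at h
  rw [h, Fintype.prod_eq_single x fun a ha => by simp [ha]]
  simp

lemma sum_bernWeight_mul_of_eq_ite (p : α → ℝ) (b : α → Bool)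
    (hp : ∀ a, p a = if b a then 1 else 0) (G : (α → Bool) → ℝ) :
    ∑ f, bernWeight p f * G f = G b := by
  have hb : bernWeight p b = 1 := prod_eq_one fun a _ => by cases h : b a <;> simp [hp, h]
  rw [Fintype.sum_eq_single b, hb, one_mul]
  intro f hf
  obtain ⟨a, ha⟩ := Function.ne_iff.1 hf
  have : (if f a then p a else 1 - p a) = 0 := by
    cases h : b a <;> simp_all
  rw [bernWeight, prod_eq_zero (mem_univ a) this, zero_mul]

omit [DecidableEq α] in
lemma bernWeight_one_sub (p : α → ℝ) (f : α → Bool) :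
    bernWeight (fun a => 1 - p a) f = bernWeight p (fun a => !f a) := by
  refine prod_congr rfl fun a _ => ?_
  cases h : f a <;> simp [h]

lemma sum_bernWeight_one_sub_mul (p : α → ℝ) (G : (α → Bool) → ℝ) :
    ∑ f, bernWeight (fun a => 1 - p a) f * G f = ∑ f, bernWeight p f * G (fun a => !f a) := by
  have hnot : Function.Involutive fun (f : α → Bool) a => !f a := fun f => by simp
  rw [← Equiv.sum_comp (hnot.toPerm _)]
  simp only [Function.Involutive.coe_toPerm, bernWeight_one_sub, Bool.not_not]

omit [DecidableEq α] in
lemma bernWeight_sumElim {β : Type*} [Fintype β] (p : α ⊕ β → ℝ) (f : α → Bool)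
    (g : β → Bool) :
    bernWeight p (Sum.elim f g) = bernWeight (p ∘ Sum.inl) f * bernWeight (p ∘ Sum.inr) g :=
  Fintype.prod_sum_type _

lemma sum_bernWeight_mul_restrict (P : α → Prop) [DecidablePred P] (p : α → ℝ)
    (G : ({a // P a} → Bool) → ℝ) :
    ∑ f, bernWeight p f * G (fun a => f a) =
      ∑ h, bernWeight (fun a : {a // P a} => p a) h * G h := by
  let e := (Equiv.piEquivPiSubtypeProd P fun _ => Bool).symm
  rw [← e.sum_comp, Fintype.sum_prod_type]
  refine sum_congr rfl fun h _ => ?_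
  have hsplit : ∀ k, bernWeight p (e (h, k)) =
      bernWeight (fun a : {a // P a} => p a) h * bernWeight (fun a : {a // ¬ P a} => p a) k := by
    intro k
    rw [bernWeight, ← Fintype.prod_subtype_mul_prod_subtype P]
    congr 1 <;> refine prod_congr rfl fun a _ => ?_ <;> simp [e, a.2]
  have hrestr : ∀ k, (fun a : {a // P a} => e (h, k) a) = h := fun k =>
    funext fun a => dif_pos a.2
  simp_rw [hsplit, hrestr, mul_right_comm _ _ (G h), ← mul_sum, sum_bernWeight, mul_one]

end BernWeight

section CoinWeight
variable {W : Type*} [Fintype W] [DecidableEq W]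

omit [DecidableEq W] in
lemma coinWeight_eq (σ γ : W → ℝ) (τ : W → W → ℝ) (ω : Coins W) :
    coinWeight σ γ τ ω = bernWeight σ ω.1 * bernWeight γ ω.2.1 *
      bernWeight (Function.uncurry τ) (Function.uncurry ω.2.2) := by
  rw [coinWeight, bernWeight, bernWeight, bernWeight, Fintype.prod_prod_type]
  rfl

lemma sum_coinWeight_single_mul (s : W) (γ : W → ℝ) (τ : W → W → ℝ)
    (G : Coins W → ℝ) :
    ∑ ω, coinWeight (fun x => if x = s then 1 else 0) γ τ ω * G ω =
      ∑ r, bernWeight γ r * ∑ c : W × W → Bool, bernWeight (Function.uncurry τ) c *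
        G (fun x => decide (x = s), r, Function.curry c) := by
  simp_rw [Fintype.sum_prod_type, ← (Equiv.curry W W Bool).sum_comp, coinWeight_eq,
    Equiv.curry_apply, Function.uncurry_curry, mul_assoc, ← mul_sum]
  exact sum_bernWeight_mul_of_eq_ite _ _ (fun x => by by_cases h : x = s <;> simp [h])
    fun a => ∑ r, bernWeight γ r * ∑ c, bernWeight (Function.uncurry τ) c *
      G (a, r, Function.curry c)

lemma sum_coinWeight_single_one_mul (s : W) (γ : W → ℝ) (G : Coins W → ℝ) :
    ∑ ω, coinWeight (fun x => if x = s then 1 else 0) γ (fun _ _ => 1) ω * G ω =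
      ∑ r, bernWeight γ r * G (fun x => decide (x = s), r, fun _ _ => true) := by
  rw [sum_coinWeight_single_mul]
  refine sum_congr rfl fun r _ => ?_
  rw [sum_bernWeight_mul_of_eq_ite (Function.uncurry fun _ _ => 1) (fun _ => true) fun _ => rfl]
  rfl

end CoinWeight

section Dynamics
variable {W : Type*} [Fintype W] [DecidableEq W] (B : W → W → Bool) (ω : Coins W)

lemma mem_sirStep_fst {p : Finset W × Finset W} {x : W} :
    x ∈ (sirStep B ω p).1 ↔ x ∉ p.1 ∧ x ∉ p.2 ∧
      ∃ u ∈ p.1, ω.2.1 u = false ∧ B u x = true ∧ ω.2.2 u x = true := by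
  simp [sirStep]

lemma disjoint_sirStep (p : Finset W × Finset W) :
    Disjoint (sirStep B ω p).1 (sirStep B ω p).2 := by
  refine disjoint_left.2 fun x hx hR => ?_
  rw [mem_sirStep_fst] at hx
  exact (mem_union.1 hR).elim hx.2.1 hx.1

lemma disjoint_sirProc : ∀ t, Disjoint (sirProc B ω t).1 (sirProc B ω t).2
  | 0 => disjoint_empty_right _
  | _ + 1 => disjoint_sirStep B ω _

lemma sirStep_of_fst_eq_empty {p : Finset W × Finset W} (hp : p.1 = ∅) : sirStep B ω p = p := by
  ext x <;> simp [sirStep, hp]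

lemma sirProc_eq_of_le {m n : ℕ} (hm : (sirProc B ω m).1 = ∅) (hmn : m ≤ n) :
    sirProc B ω n = sirProc B ω m := by
  induction n, hmn using Nat.le_induction with
  | base => rfl
  | succ n _ ih => rw [sirProc, ih, sirStep_of_fst_eq_empty B ω hm]

lemma sirProc_eq_of_fst_eq_empty {m n : ℕ} (hm : (sirProc B ω m).1 = ∅)
    (hn : (sirProc B ω n).1 = ∅) : sirProc B ω m = sirProc B ω n := by
  rcases le_total m n with h | h
  · exact (sirProc_eq_of_le B ω hm h).symm
  · exact sirProc_eq_of_le B ω hn h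

/-- While the epidemic is alive, each step moves at least one node into `R`. -/
lemma le_card_snd_sirProc :
    ∀ t, (∀ s < t, (sirProc B ω s).1.Nonempty) → t ≤ #(sirProc B ω t).2
  | 0, _ => Nat.zero_le _
  | t + 1, h => by
    have ih := le_card_snd_sirProc t fun s hs => h s (Nat.lt_succ_of_lt hs)
    have hI := (h t (Nat.lt_succ_self t)).card_pos
    change t + 1 ≤ #((sirProc B ω t).2 ∪ (sirProc B ω t).1)
    rw [card_union_of_disjoint (disjoint_sirProc B ω t).symm]
    omega

lemma exists_sirProc_fst_eq_empty : ∃ t ≤ Fintype.card W, (sirProc B ω t).1 = ∅ := by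
  by_contra! h
  have := le_card_snd_sirProc B ω (Fintype.card W + 1) fun s hs =>
    h s (Nat.lt_succ_iff.1 hs)
  have := card_le_univ (sirProc B ω (Fintype.card W + 1)).2
  omega

lemma everInf_eq_snd {t : ℕ} (ht : (sirProc B ω t).1 = ∅) :
    everInf B ω = (sirProc B ω t).2 := by
  obtain ⟨t₀, ht₀, h₀⟩ := exists_sirProc_fst_eq_empty B ω
  have hcard := sirProc_eq_of_le B ω h₀ ht₀
  rw [everInf, hcard, sirProc_eq_of_fst_eq_empty B ω h₀ ht, ht, empty_union]

end Dynamics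

lemma card_filter_isLeft_disjSum {α β : Type*} (s : Finset α) (t : Finset β) :
    #((s.disjSum t).filter fun x => x.isLeft) = #s := by
  rw [← card_map (s := s) Function.Embedding.inl]
  refine congrArg card (ext fun x => ?_)
  cases x <;> simp

section Coupling
variable (A : V → V → Bool) (ω : Coins V)

def unremovedOutEdges (S : Finset V) : Finset (EdgeOf A) :=
  univ.filter fun e => e.1.1 ∈ S ∧ ω.2.1 e.1.1 = false

/-- The reduced state at time `2t` coupled to the original state `p` at time `t`: the helpers
of the edges leaving unremoved recovered nodes were infected at an odd time and have recovered. -/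
def liftState (p : Finset V × Finset V) : Finset (HelperV A) × Finset (HelperV A) :=
  (p.1.disjSum ∅, p.2.disjSum (unremovedOutEdges A ω p.2))

lemma sirStep_liftState {p : Finset V × Finset V} (hp : Disjoint p.1 p.2) :
    sirStep (helperAdj A) (liftCoins A ω) (liftState A ω p) =
      ((∅ : Finset V).disjSum (unremovedOutEdges A ω p.1),
       (p.2 ∪ p.1).disjSum (unremovedOutEdges A ω p.2)) := by
  ext x
  · cases x with
    | inl v => simp [mem_sirStep_fst, liftState, helperAdj]
    | inr e =>
      have : e.1.1 ∈ p.1 → e.1.1 ∉ p.2 := fun h => disjoint_left.1 hp h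
      simp [mem_sirStep_fst, liftState, unremovedOutEdges, helperAdj, liftCoins]
      tauto
  · cases x <;> simp [sirStep, liftState]

lemma sirStep_sirStep_liftState {p : Finset V × Finset V} (hp : Disjoint p.1 p.2) :
    sirStep (helperAdj A) (liftCoins A ω)
        (sirStep (helperAdj A) (liftCoins A ω) (liftState A ω p)) =
      liftState A ω (sirStep A ω p) := by
  rw [sirStep_liftState A ω hp]
  ext x
  · cases x with
    | inl v =>
      simp [mem_sirStep_fst, liftState, unremovedOutEdges, helperAdj, liftCoins]
      grind
    | inr e => simp [mem_sirStep_fst, liftState, helperAdj]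
  · cases x with
    | inl v => simp [sirStep, liftState]
    | inr e =>
      simp [sirStep, liftState, unremovedOutEdges]
      tauto

lemma sirProc_liftCoins (t : ℕ) :
    sirProc (helperAdj A) (liftCoins A ω) (2 * t) = liftState A ω (sirProc A ω t) := by
  induction t with
  | zero =>
    ext x
    · cases x <;> simp only [sirProc, liftState, mem_filter] <;> simp [liftCoins]
    · cases x <;> simp [sirProc, liftState, unremovedOutEdges]
  | succ t ih =>
    rw [show 2 * (t + 1) = 2 * t + 1 + 1 by ring]
    exact (congrArg _ (congrArg _ ih)).trans
      (sirStep_sirStep_liftState A ω (disjoint_sirProc A ω t))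

lemma card_filter_isLeft_everInf_liftCoins :
    #((everInf (helperAdj A) (liftCoins A ω)).filter fun x => x.isLeft = true) =
      #(everInf A ω) := by
  obtain ⟨t, -, ht⟩ := exists_sirProc_fst_eq_empty A ω
  have hlift := sirProc_liftCoins A ω t
  have hlift_fst : (sirProc (helperAdj A) (liftCoins A ω) (2 * t)).1 = ∅ := by
    simp [hlift, liftState, ht]
  rw [everInf_eq_snd A ω ht, everInf_eq_snd _ _ hlift_fst, hlift, liftState,
    card_filter_isLeft_disjSum]

end Coupling

section Reduction
variable (A : V → V → Bool) (s : V) (γ : V → ℝ) (τ : V → V → ℝ)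

omit [Fintype V] in
lemma liftCoins_single (r : V → Bool) (c : V → V → Bool) :
    liftCoins A (fun v => decide (v = s), r, c) =
      (fun x => decide (x = Sum.inl s), Sum.elim r fun e => !c e.1.1 e.1.2, fun _ _ => true) := by
  refine Prod.ext (funext ?_) (Prod.ext (funext ?_) rfl) <;> rintro (v | e) <;> simp [liftCoins]

lemma sum_coinWeight_helper_mul_eq_liftCoins (N : Coins (HelperV A) → ℝ) :
    ∑ ω, coinWeight (fun x => if x = Sum.inl s then 1 else 0) (helperGamma A γ τ)
        (fun _ _ => 1) ω * N ω =
      ∑ ω, coinWeight (fun v => if v = s then 1 else 0) γ τ ω * N (liftCoins A ω) := by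
  calc _ = ∑ r : HelperV A → Bool, bernWeight (helperGamma A γ τ) r *
          N (fun x => decide (x = Sum.inl s), r, fun _ _ => true) :=
        sum_coinWeight_single_one_mul _ _ _
    _ = ∑ r : V → Bool, ∑ d : EdgeOf A → Bool,
          bernWeight γ r * bernWeight (fun e => 1 - τ e.1.1 e.1.2) d *
            N (fun x => decide (x = Sum.inl s), Sum.elim r d, fun _ _ => true) := by
        rw [← (Equiv.sumArrowEquivProdArrow _ _ _).symm.sum_comp, Fintype.sum_prod_type]
        exact sum_congr rfl fun r _ => sum_congr rfl fun d _ =>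
          congrArg (· * _) (bernWeight_sumElim _ r d)
    _ = ∑ r, bernWeight γ r * ∑ d : EdgeOf A → Bool, bernWeight (fun e => τ e.1.1 e.1.2) d *
          N (fun x => decide (x = Sum.inl s), Sum.elim r fun e => !d e, fun _ _ => true) := by
        simp_rw [mul_assoc, ← mul_sum, sum_bernWeight_one_sub_mul]
    _ = ∑ r, bernWeight γ r * ∑ c : V × V → Bool, bernWeight (Function.uncurry τ) c *
          N (liftCoins A (fun v => decide (v = s), r, Function.curry c)) := by
        simp_rw [liftCoins_single]
        refine sum_congr rfl fun r _ => congrArg (bernWeight γ r * ·) ?_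
        exact (sum_bernWeight_mul_restrict (fun e : V × V => A e.1 e.2 = true)
          (Function.uncurry τ) fun d =>
            N (fun x => decide (x = Sum.inl s), Sum.elim r fun e => !d e, fun _ _ => true)).symm
    _ = _ := (sum_coinWeight_single_mul s γ τ fun ω => N (liftCoins A ω)).symm

end Reduction

theorem sir_helper_reduction_general
    (A : V → V → Bool) (s : V) (γ : V → ℝ) (τ : V → V → ℝ) :
    (∀ e : EdgeOf A,
      (∑ ω : Coins (HelperV A),
        coinWeight (fun x => if x = Sum.inl s then 1 else 0) (helperGamma A γ τ)
          (fun _ _ => 1) ω * (if ω.2.1 (Sum.inr e) = false then 1 else 0))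
        = τ e.1.1 e.1.2) ∧
    (∀ ω : Coins V, ω.1 = (fun v => decide (v = s)) → ∀ (t : ℕ) (v : V),
      v ∈ (sirProc A ω t).1 ↔
        Sum.inl v ∈ (sirProc (helperAdj A) (liftCoins A ω) (2 * t)).1) ∧
    (∑ ω : Coins (HelperV A),
        coinWeight (fun x => if x = Sum.inl s then 1 else 0) (helperGamma A γ τ)
          (fun _ _ => 1) ω *
        (((everInf (helperAdj A) ω).filter (fun x => x.isLeft = true)).card : ℝ))
      = meanExtent A (fun v => if v = s then 1 else 0) γ τ := by
  refine ⟨fun e => ?_, fun ω _ t v => ?_, ?_⟩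
  · rw [sum_coinWeight_single_one_mul,
      sum_bernWeight_mul_apply _ (Sum.inr e) fun b => if b = false then 1 else 0]
    simp [helperGamma]
  · simp [sirProc_liftCoins, liftState]
  · simp_rw [sum_coinWeight_helper_mul_eq_liftCoins, card_filter_isLeft_everInf_liftCoins,
      meanExtent]

/-- **reduction of transmission to removal.** For the SIR epidemic on
`G(V,A)` with source `s`, transmission `τ` and removal `γ`, and the reduced epidemic
on the helper graph (all transmissions `1`, helper `h_e` removed with probability
`1 - τ(e)`): (a) the probability that the helper of edge `(v,w)` is not removed —
i.e. that an infected `v` transmits to `w` — equals `τ(v,w)`; (b) under the natural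
coupling, `v ∈ V` is infected at time `t` in the original epidemic iff it is
infected at time `2t` in the reduced one; (c) the expected number of ultimately
infected original (non-helper) nodes in the reduced epidemic equals the mean final
extent `E(|R_n|)` of the original epidemic. -/
theorem sir_helper_reduction
    (A : V → V → Bool) (s : V) (γ : V → ℝ) (τ : V → V → ℝ)
    (hγ : ∀ v, 0 ≤ γ v ∧ γ v ≤ 1) (hτ : ∀ u v, 0 ≤ τ u v ∧ τ u v ≤ 1) :
    (∀ e : EdgeOf A,
      (∑ ω : Coins (HelperV A),
        coinWeight (fun x => if x = Sum.inl s then 1 else 0) (helperGamma A γ τ)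
          (fun _ _ => 1) ω * (if ω.2.1 (Sum.inr e) = false then 1 else 0))
        = τ e.1.1 e.1.2) ∧
    (∀ ω : Coins V, ω.1 = (fun v => decide (v = s)) → ∀ (t : ℕ) (v : V),
      v ∈ (sirProc A ω t).1 ↔
        Sum.inl v ∈ (sirProc (helperAdj A) (liftCoins A ω) (2 * t)).1) ∧
    (∑ ω : Coins (HelperV A),
        coinWeight (fun x => if x = Sum.inl s then 1 else 0) (helperGamma A γ τ)
          (fun _ _ => 1) ω *
        (((everInf (helperAdj A) ω).filter (fun x => x.isLeft = true)).card : ℝ))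
      = meanExtent A (fun v => if v = s then 1 else 0) γ τ :=
  sir_helper_reduction_general A s γ τ
end

section
/- (Mean transmissibility does not determine mean extent.) There exist a directed graph G and two edge transmission probability functions τ₁, τ₂ with the same removal and induction probabilities, such that the average of τ₁ over edges is strictly greater than the average of τ₂ over edges, yet the mean final extent of the SIR epidemic under τ₁ is strictly smaller than under τ₂. -/
open Finset

variable {V : Type*} [Fintype V] [DecidableEq V]

/-!
Make every coin certain, so that the epidemic is deterministic. On the complete loopless digraph
on three nodes, with node `0` the only initial infective and no removal, let `τ₁` block exactly
the two edges leaving `0`, which every transmission has to cross, and open the four others: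
its average is `4/6` but nothing spreads, so the extent is `1`. Its complement `τ₂ = 1 - τ₁` has
average `2/6`, yet `0` infects everybody and the extent is `3`.
-/

def boolProb (b : Bool) : ℝ := if b then 1 else 0

lemma boolProb_mem_Icc (b : Bool) : 0 ≤ boolProb b ∧ boolProb b ≤ 1 := by
  cases b <;> norm_num [boolProb]

lemma ite_boolProb (c b : Bool) :
    (if c then boolProb b else 1 - boolProb b) = if c = b then 1 else 0 := by
  cases c <;> cases b <;> norm_num [boolProb]

lemma sum_boolProb {ι : Type*} (s : Finset ι) (t : ι → Bool) :
    ∑ i ∈ s, boolProb (t i) = #(s.filter fun i => t i = true) := by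
  simp only [boolProb, ← Finset.sum_boole]

lemma coinWeight_boolProb {V : Type*} [Fintype V] (s g : V → Bool) (t : V → V → Bool)
    (ω : Coins V) :
    coinWeight (fun v => boolProb (s v)) (fun v => boolProb (g v)) (fun u v => boolProb (t u v)) ω
      = if ω = (s, g, t) then 1 else 0 := by
  simp only [coinWeight, ite_boolProb, Fintype.prod_boole, ← ite_and, mul_ite, mul_one, mul_zero]
  congr 1
  simp only [Prod.ext_iff, funext_iff]
  exact propext (by tauto)

lemma meanExtent_boolProb (A : V → V → Bool) (s g : V → Bool) (t : V → V → Bool) :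
    meanExtent A (fun v => boolProb (s v)) (fun v => boolProb (g v)) (fun u v => boolProb (t u v))
      = #(everInf A (s, g, t)) := by
  simp only [meanExtent, coinWeight_boolProb, ite_mul, one_mul, zero_mul,
    Finset.sum_ite_eq', Finset.mem_univ, if_true]

def triangle : Fin 3 → Fin 3 → Bool := fun u v => u != v

def leavesZero : Fin 3 → Fin 3 → Bool := fun u _ => u == 0

lemma card_everInf_not_leavesZero :
    #(everInf triangle (fun v => v == 0, fun _ => false, fun u v => !leavesZero u v)) = 1 := by
  decide

lemma card_everInf_leavesZero :
    #(everInf triangle (fun v => v == 0, fun _ => false, leavesZero)) = 3 := by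
  decide

lemma card_leavesZero_edges_lt :
    #((univ.filter fun p : Fin 3 × Fin 3 => triangle p.1 p.2 = true).filter
        fun p => leavesZero p.1 p.2 = true) <
      #((univ.filter fun p : Fin 3 × Fin 3 => triangle p.1 p.2 = true).filter
        fun p => (!leavesZero p.1 p.2) = true) := by
  decide

/-- **mean transmissibility does not determine mean extent.** There
exist a directed graph and two transmission probability functions `τ₁, τ₂` (with the
same induction and removal probabilities) such that the average of `τ₁` over the
edges is strictly larger than that of `τ₂`, yet the mean final extent under `τ₁` is
strictly smaller than under `τ₂`. -/
theorem sir_avg_transmissibility_not_determining :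
    ∃ (n : ℕ) (A : Fin n → Fin n → Bool) (σ γ : Fin n → ℝ) (τ₁ τ₂ : Fin n → Fin n → ℝ),
      (∀ v, 0 ≤ σ v ∧ σ v ≤ 1) ∧ (∀ v, 0 ≤ γ v ∧ γ v ≤ 1) ∧
      (∀ u v, 0 ≤ τ₁ u v ∧ τ₁ u v ≤ 1) ∧ (∀ u v, 0 ≤ τ₂ u v ∧ τ₂ u v ≤ 1) ∧
      (Finset.univ.filter (fun p : Fin n × Fin n => A p.1 p.2 = true)).Nonempty ∧
      (∑ p ∈ Finset.univ.filter (fun p : Fin n × Fin n => A p.1 p.2 = true), τ₁ p.1 p.2) /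
          ((Finset.univ.filter (fun p : Fin n × Fin n => A p.1 p.2 = true)).card : ℝ)
        > (∑ p ∈ Finset.univ.filter (fun p : Fin n × Fin n => A p.1 p.2 = true), τ₂ p.1 p.2) /
          ((Finset.univ.filter (fun p : Fin n × Fin n => A p.1 p.2 = true)).card : ℝ) ∧
      meanExtent A σ γ τ₁ < meanExtent A σ γ τ₂ := by
  refine ⟨3, triangle, fun v => boolProb (v == 0), fun _ => boolProb false,
    fun u v => boolProb (!leavesZero u v), fun u v => boolProb (leavesZero u v),
    fun _ => boolProb_mem_Icc _, fun _ => boolProb_mem_Icc _, fun _ _ => boolProb_mem_Icc _,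
    fun _ _ => boolProb_mem_Icc _, ⟨(0, 1), by decide⟩, ?_, ?_⟩
  · simp only [sum_boolProb]
    exact div_lt_div_of_pos_right (by exact_mod_cast card_leavesZero_edges_lt)
      (by exact_mod_cast Finset.card_pos.mpr ⟨(0, 1), by decide⟩)
  · simp only [meanExtent_boolProb, card_everInf_not_leavesZero, card_everInf_leavesZero]
    norm_num
end

section
/- (2FleeSIR extent is dominated by SIR extent.) On any undirected graph, couple a 2FleeSIR epidemic and an SIR epidemic with identical initial infectees, identical removal probabilities, identical transmission probabilities, and shared randomness (the same removal coin flips and the same per-edge transmission coin flips). Then the set of nodes ever infected in the 2FleeSIR epidemic is a subset of the set of nodes ever infected in the SIR epidemic; in particular the mean final extent of 2FleeSIR is at most that of SIR. -/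
open Finset

variable {V : Type*} [Fintype V] [DecidableEq V]

variable {V : Type*} [Fintype V] [DecidableEq V]

/-- One step of 2FleeSIR: the state is `(I, R, Sev)`, where `Sev` is the set of
nodes that have (permanently) severed all their ties.  First (step 0) every
susceptible node observing at least `2` infected in-neighbours severs all its ties;
then infected nodes transmit as in SIR, except that no transmission can reach a
severed node; then infected nodes recover. -/
def fleeStep (A : V → V → Bool) (ω : Coins V) (p : Finset V × Finset V × Finset V) :
    Finset V × Finset V × Finset V :=
  let Sev : Finset V := p.2.2 ∪ Finset.univ.filter (fun v => v ∉ p.1 ∧ v ∉ p.2.1 ∧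
      2 ≤ (Finset.univ.filter (fun u => A u v = true ∧ u ∈ p.1)).card)
  (Finset.univ.filter (fun v => v ∉ p.1 ∧ v ∉ p.2.1 ∧ v ∉ Sev ∧
      ∃ u ∈ p.1, ω.2.1 u = false ∧ A u v = true ∧ ω.2.2 u v = true),
   p.2.1 ∪ p.1, Sev)

/-- The 2FleeSIR process `(I_t, R_t, Sev_t)`. -/
def fleeProc (A : V → V → Bool) (ω : Coins V) : ℕ → Finset V × Finset V × Finset V
  | 0 => (Finset.univ.filter (fun v => ω.1 v = true), ∅, ∅)
  | t + 1 => fleeStep A ω (fleeProc A ω t)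

/-- The ever-infected set of the 2FleeSIR epidemic. -/
def everFlee (A : V → V → Bool) (ω : Coins V) : Finset V :=
  (fleeProc A ω (Fintype.card V)).1 ∪ (fleeProc A ω (Fintype.card V)).2.1

/-- The mean final extent of the 2FleeSIR epidemic. -/
def fleeMeanExtent (A : V → V → Bool) (σ γ : V → ℝ) (τ : V → V → ℝ) : ℝ :=
  ∑ ω : Coins V, coinWeight σ γ τ ω * ((everFlee A ω).card : ℝ)

/-! Under the shared coins, a node infected in 2FleeSIR is infected through an edge whose
transmission coin is `true` and whose source is infected and not removed in 2FleeSIR. By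
induction that source has already been reached by SIR, and from the moment it was infected
in SIR it transmits along the same edge unless the target was reached earlier. Severing only
deletes transmissions, so SIR reaches everything 2FleeSIR does; averaging the pointwise
inequality of extents against the nonnegative weights gives the bound on the means. -/

section Coupling

variable (A : V → V → Bool) (ω : Coins V)

def everInfBy (t : ℕ) : Finset V := (sirProc A ω t).1 ∪ (sirProc A ω t).2

lemma everInfBy_subset_succ (t : ℕ) : everInfBy A ω t ⊆ everInfBy A ω (t + 1) := by
  intro v hv
  simp only [everInfBy, sirProc, sirStep, mem_union] at hv ⊢
  tauto

lemma everInfBy_mono : Monotone (everInfBy A ω) :=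
  monotone_nat_of_le_succ (everInfBy_subset_succ A ω)

lemma exists_lt_mem_sirProc_of_mem_removed {t : ℕ} {u : V} (hu : u ∈ (sirProc A ω t).2) :
    ∃ s < t, u ∈ (sirProc A ω s).1 := by
  induction t with
  | zero => simp [sirProc] at hu
  | succ n ih =>
    simp only [sirProc, sirStep, mem_union] at hu
    rcases hu with hR | hI
    · obtain ⟨s, hs, hmem⟩ := ih hR
      exact ⟨s, by omega, hmem⟩
    · exact ⟨n, n.lt_succ_self, hI⟩

lemma mem_everInfBy_succ_of_transmit {t : ℕ} {u v : V} (hu : u ∈ (sirProc A ω t).1)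
    (hrem : ω.2.1 u = false) (hA : A u v = true) (htr : ω.2.2 u v = true) :
    v ∈ everInfBy A ω (t + 1) := by
  by_cases hv : v ∈ everInfBy A ω t
  · exact everInfBy_subset_succ A ω t hv
  · simp only [everInfBy, mem_union, not_or] at hv
    simp only [everInfBy, sirProc, sirStep, mem_union, mem_filter, mem_univ, true_and]
    exact Or.inl ⟨hv.1, hv.2, u, hu, hrem, hA, htr⟩

lemma mem_everInfBy_succ_of_mem_everInfBy {t : ℕ} {u v : V} (hu : u ∈ everInfBy A ω t)
    (hrem : ω.2.1 u = false) (hA : A u v = true) (htr : ω.2.2 u v = true) :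
    v ∈ everInfBy A ω (t + 1) := by
  rcases mem_union.mp hu with hI | hR
  · exact mem_everInfBy_succ_of_transmit A ω hI hrem hA htr
  · obtain ⟨s, hs, hI⟩ := exists_lt_mem_sirProc_of_mem_removed A ω hR
    exact everInfBy_mono A ω (by omega) (mem_everInfBy_succ_of_transmit A ω hI hrem hA htr)

lemma fleeProc_subset_everInfBy (t : ℕ) :
    (fleeProc A ω t).1 ∪ (fleeProc A ω t).2.1 ⊆ everInfBy A ω t := by
  induction t with
  | zero => simp [fleeProc, everInfBy, sirProc]
  | succ n ih =>
    intro v hv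
    simp only [fleeProc, fleeStep, mem_union, mem_filter, mem_univ, true_and] at hv
    rcases hv with ⟨-, -, -, u, hu, hrem, hA, htr⟩ | hR | hI
    · exact mem_everInfBy_succ_of_mem_everInfBy A ω (ih (mem_union_left _ hu)) hrem hA htr
    · exact everInfBy_subset_succ A ω n (ih (mem_union_right _ hR))
    · exact everInfBy_subset_succ A ω n (ih (mem_union_left _ hI))

lemma everFlee_subset_everInf : everFlee A ω ⊆ everInf A ω :=
  fleeProc_subset_everInfBy A ω (Fintype.card V)

end Coupling

omit [DecidableEq V] in
lemma coinWeight_nonneg {σ γ : V → ℝ} {τ : V → V → ℝ}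
    (hσ : ∀ v, 0 ≤ σ v ∧ σ v ≤ 1) (hγ : ∀ v, 0 ≤ γ v ∧ γ v ≤ 1)
    (hτ : ∀ u v, 0 ≤ τ u v ∧ τ u v ≤ 1) (ω : Coins V) :
    0 ≤ coinWeight σ γ τ ω := by
  have ite_nonneg {p : Prop} [Decidable p] {x : ℝ} (hx : 0 ≤ x ∧ x ≤ 1) :
      0 ≤ if p then x else 1 - x := by
    split_ifs <;> linarith [hx.1, hx.2]
  unfold coinWeight
  refine mul_nonneg (mul_nonneg ?_ ?_) ?_
  · exact prod_nonneg fun v _ => ite_nonneg (hσ v)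
  · exact prod_nonneg fun v _ => ite_nonneg (hγ v)
  · exact prod_nonneg fun u _ => prod_nonneg fun v _ => ite_nonneg (hτ u v)

theorem flee_dominated_by_sir_general {V : Type*} [Fintype V] [DecidableEq V]
    (A : V → V → Bool)
    (σ γ : V → ℝ) (τ : V → V → ℝ)
    (hσ : ∀ v, 0 ≤ σ v ∧ σ v ≤ 1) (hγ : ∀ v, 0 ≤ γ v ∧ γ v ≤ 1)
    (hτ : ∀ u v, 0 ≤ τ u v ∧ τ u v ≤ 1) :
    (∀ ω : Coins V, everFlee A ω ⊆ everInf A ω) ∧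
    fleeMeanExtent A σ γ τ ≤ meanExtent A σ γ τ := by
  refine ⟨everFlee_subset_everInf A, sum_le_sum fun ω _ => ?_⟩
  gcongr
  · exact coinWeight_nonneg hσ hγ hτ ω
  · exact everFlee_subset_everInf A ω

/-- **2FleeSIR extent is dominated by SIR extent.** On any undirected
(symmetric) graph, couple the 2FleeSIR and SIR epidemics using identical initial
infectees, removal coins and per-edge transmission coins (the same `ω`).  Then for
every coin outcome the set of ever-infected nodes under 2FleeSIR is a subset of the
one under SIR; consequently the mean final extent of 2FleeSIR is at most that of
SIR. -/
theorem flee_dominated_by_sir {V : Type*} [Fintype V] [DecidableEq V]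
    (A : V → V → Bool) (hsym : ∀ u v, A u v = A v u)
    (σ γ : V → ℝ) (τ : V → V → ℝ)
    (hσ : ∀ v, 0 ≤ σ v ∧ σ v ≤ 1) (hγ : ∀ v, 0 ≤ γ v ∧ γ v ≤ 1)
    (hτ : ∀ u v, 0 ≤ τ u v ∧ τ u v ≤ 1) :
    (∀ ω : Coins V, everFlee A ω ⊆ everInf A ω) ∧
    fleeMeanExtent A σ γ τ ≤ meanExtent A σ γ τ :=
  flee_dominated_by_sir_general A σ γ τ hσ hγ hτ
end

section
/- (Infection-time parity under the helper-node reduction.) In the helper-node construction that replaces each edge (v,w) by a path (v,h),(h,w) with τ = 1 and γ̂(h) = 1 − τ(v,w), under the natural coupling every original node v is infected at time t in the original epidemic if and only if v is infected at time 2t in the reduced epidemic, and the reduced epidemic terminates by time 2n where n = |V|. -/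
open Finset

variable {V : Type*} [Fintype V] [DecidableEq V]

variable {V : Type*} [Fintype V] [DecidableEq V]

section Aux

variable {W : Type*} [Fintype W] [DecidableEq W]

lemma sirProc_succ_fst_mem (A : W → W → Bool) (ω : Coins W) (t : ℕ) (v : W) :
    v ∈ (sirProc A ω (t+1)).1 ↔
      v ∉ (sirProc A ω t).1 ∧ v ∉ (sirProc A ω t).2 ∧
      ∃ u, u ∈ (sirProc A ω t).1 ∧ ω.2.1 u = false ∧ A u v = true ∧
        ω.2.2 u v = true := by
  simp [sirProc, sirStep]

lemma sirProc_succ_snd (A : W → W → Bool) (ω : Coins W) (t : ℕ) :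
    (sirProc A ω (t+1)).2 = (sirProc A ω t).2 ∪ (sirProc A ω t).1 := rfl

lemma sir_disj (A : W → W → Bool) (ω : Coins W) (t : ℕ) (v : W) :
    v ∈ (sirProc A ω t).1 → v ∉ (sirProc A ω t).2 := by
  cases t with
  | zero => simp [sirProc]
  | succ t =>
    intro h
    rw [sirProc_succ_fst_mem] at h
    rw [sirProc_succ_snd]
    simp only [Finset.mem_union]
    tauto

lemma sir_empty_succ (A : W → W → Bool) (ω : Coins W) (t : ℕ)
    (h : (sirProc A ω t).1 = ∅) : (sirProc A ω (t+1)).1 = ∅ := by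
  rw [Finset.eq_empty_iff_forall_notMem]
  intro v hv
  rw [sirProc_succ_fst_mem] at hv
  obtain ⟨-, -, u, hu, -⟩ := hv
  simp [h] at hu

lemma sir_empty_le (A : W → W → Bool) (ω : Coins W) {t t' : ℕ} (h : t ≤ t')
    (he : (sirProc A ω t).1 = ∅) : (sirProc A ω t').1 = ∅ := by
  obtain ⟨k, rfl⟩ := Nat.exists_eq_add_of_le h
  clear h
  induction k with
  | zero => exact he
  | succ k ih => exact sir_empty_succ A ω _ ih

lemma sir_terminates (A : W → W → Bool) (ω : Coins W) :
    (sirProc A ω (Fintype.card W)).1 = ∅ := by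
  by_contra h
  have hne : ∀ t ≤ Fintype.card W, (sirProc A ω t).1.Nonempty := by
    intro t ht
    rcases (sirProc A ω t).1.eq_empty_or_nonempty with he | hn
    · exact absurd (sir_empty_le A ω ht he) h
    · exact hn
  have hcard : ∀ t, t ≤ Fintype.card W → t + 1 ≤ (sirProc A ω (t+1)).2.card := by
    intro t
    induction t with
    | zero =>
      intro ht
      rw [sirProc_succ_snd]
      have := hne 0 (Nat.zero_le _)
      have h1 : (1 : ℕ) ≤ (sirProc A ω 0).1.card := Finset.card_pos.mpr this
      calc (1:ℕ) ≤ (sirProc A ω 0).1.card := h1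
        _ ≤ ((sirProc A ω 0).2 ∪ (sirProc A ω 0).1).card :=
          Finset.card_le_card Finset.subset_union_right
    | succ t ih =>
      intro ht
      have ht' : t ≤ Fintype.card W := Nat.le_of_succ_le ht
      have ihc := ih ht'
      rw [sirProc_succ_snd]
      have hdisj : Disjoint (sirProc A ω (t+1)).2 (sirProc A ω (t+1)).1 := by
        rw [Finset.disjoint_right]
        exact fun v hv => sir_disj A ω (t+1) v hv
      rw [Finset.card_union_of_disjoint hdisj]
      have h1 : (1 : ℕ) ≤ (sirProc A ω (t+1)).1.card :=
        Finset.card_pos.mpr (hne (t+1) ht)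
      omega
  have := hcard (Fintype.card W) le_rfl
  have hle : (sirProc A ω (Fintype.card W + 1)).2.card ≤ Fintype.card W :=
    Finset.card_le_univ _
  omega

end Aux

lemma helper_inv (A : V → V → Bool) (ω : Coins V) (t : ℕ) :
    (∀ v : V, Sum.inl v ∈ (sirProc (helperAdj A) (liftCoins A ω) (2*t)).1 ↔
        v ∈ (sirProc A ω t).1) ∧
    (∀ e : EdgeOf A, Sum.inr e ∉ (sirProc (helperAdj A) (liftCoins A ω) (2*t)).1) ∧
    (∀ v : V, Sum.inl v ∈ (sirProc (helperAdj A) (liftCoins A ω) (2*t)).2 ↔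
        v ∈ (sirProc A ω t).2) ∧
    (∀ e : EdgeOf A, Sum.inr e ∈ (sirProc (helperAdj A) (liftCoins A ω) (2*t)).2 ↔
        (e.1.1 ∈ (sirProc A ω t).2 ∧ ω.2.1 e.1.1 = false)) := by
  induction t with
  | zero =>
    simp [sirProc, liftCoins]
    refine ⟨fun v => ?_, fun a b h => ?_⟩
    · exact Finset.mem_filter.trans (by simp)
    · intro hx
      have := (Finset.mem_filter.1 hx).2
      simp at this
  | succ t ih =>
    obtain ⟨ih1, ih2, ih3, ih4⟩ := ih
    set A' := helperAdj A with hA'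
    set ω' := liftCoins A ω with hω'
    -- odd time facts
    have hodd1 : ∀ v : V, Sum.inl v ∉ (sirProc A' ω' (2*t+1)).1 := by
      intro v hv
      rw [sirProc_succ_fst_mem] at hv
      obtain ⟨-, -, u, hu, -, hadj, -⟩ := hv
      rcases u with u' | e
      · simp [hA', helperAdj] at hadj
      · exact ih2 e hu
    have hodd2 : ∀ e : EdgeOf A, Sum.inr e ∈ (sirProc A' ω' (2*t+1)).1 ↔
        e.1.1 ∈ (sirProc A ω t).1 ∧ ω.2.1 e.1.1 = false := by
      intro e
      rw [sirProc_succ_fst_mem]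
      constructor
      · rintro ⟨-, -, u, hu, hrem, hadj, -⟩
        rcases u with u' | e'
        · have : e.1.1 = u' := by simpa [hA', helperAdj] using hadj
          subst this
          have hrem' : ω.2.1 e.1.1 = false := by simpa [hω', liftCoins] using hrem
          exact ⟨(ih1 e.1.1).1 hu, hrem'⟩
        · simp [hA', helperAdj] at hadj
      · rintro ⟨h1, h2⟩
        refine ⟨ih2 e, ?_, Sum.inl e.1.1, (ih1 e.1.1).2 h1,
          by simpa [hω', liftCoins] using h2, by simp [hA', helperAdj], rfl⟩
        rw [ih4 e]
        rintro ⟨hr, -⟩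
        exact sir_disj A ω t e.1.1 h1 hr
    have hoddR1 : ∀ v : V, Sum.inl v ∈ (sirProc A' ω' (2*t+1)).2 ↔
        v ∈ (sirProc A ω t).2 ∨ v ∈ (sirProc A ω t).1 := by
      intro v
      rw [sirProc_succ_snd, Finset.mem_union, ih1, ih3]
    have hoddR2 : ∀ e : EdgeOf A, Sum.inr e ∈ (sirProc A' ω' (2*t+1)).2 ↔
        (e.1.1 ∈ (sirProc A ω t).2 ∧ ω.2.1 e.1.1 = false) := by
      intro e
      rw [sirProc_succ_snd, Finset.mem_union]
      constructor
      · rintro (h | h)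
        · exact (ih4 e).1 h
        · exact absurd h (ih2 e)
      · exact fun h => Or.inl ((ih4 e).2 h)
    have h2succ : 2 * (t + 1) = (2 * t + 1) + 1 := by ring
    rw [h2succ]
    refine ⟨?_, ?_, ?_, ?_⟩
    · intro v
      rw [sirProc_succ_fst_mem A' ω' (2*t+1) (Sum.inl v), sirProc_succ_fst_mem A ω t v]
      constructor
      · rintro ⟨-, hR, u, hu, hrem, hadj, -⟩
        rcases u with u' | e
        · exact absurd hu (hodd1 u')
        · obtain ⟨he1, he2⟩ := (hodd2 e).1 hu
          have hv : e.1.2 = v := by simpa [hA', helperAdj] using hadj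
          have htr : ω.2.2 e.1.1 e.1.2 = true := by
            simpa [hω', liftCoins] using hrem
          rw [hoddR1] at hR
          push_neg at hR
          refine ⟨hR.2, hR.1, e.1.1, he1, he2, by rw [← hv]; exact e.2,
            by rw [← hv]; exact htr⟩
      · rintro ⟨hI, hR, u, hu, hrem, hAuv, htr⟩
        refine ⟨hodd1 v, ?_, Sum.inr ⟨(u, v), hAuv⟩, ?_, ?_, ?_, rfl⟩
        · rw [hoddR1]; rintro (h | h); exacts [hR h, hI h]
        · exact (hodd2 ⟨(u, v), hAuv⟩).2 ⟨hu, hrem⟩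
        · simpa [hω', liftCoins] using htr
        · simp [hA', helperAdj]
    · intro e he
      rw [sirProc_succ_fst_mem] at he
      obtain ⟨-, -, u, hu, -, hadj, -⟩ := he
      rcases u with u' | e'
      · exact absurd hu (hodd1 u')
      · simp [hA', helperAdj] at hadj
    · intro v
      rw [sirProc_succ_snd A' ω' (2*t+1), Finset.mem_union, hoddR1 v,
        sirProc_succ_snd A ω t, Finset.mem_union]
      have := hodd1 v
      tauto
    · intro e
      rw [sirProc_succ_snd A' ω' (2*t+1), Finset.mem_union, hoddR2 e, hodd2 e,
        sirProc_succ_snd A ω t, Finset.mem_union]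
      tauto

/-- **infection-time parity under the helper-node reduction.** Under
the natural coupling between the original epidemic (source `s`) and the reduced
epidemic on the helper graph, every original node `v` is infected at time `t` in the
original epidemic iff it is infected at time `2t` in the reduced epidemic, and the
reduced epidemic terminates by time `2n`, `n = |V|`. -/
theorem sir_helper_parity_and_termination
    (A : V → V → Bool) (s : V) (ω : Coins V)
    (hinit : ω.1 = (fun v => decide (v = s))) :
    (∀ (t : ℕ) (v : V),
      v ∈ (sirProc A ω t).1 ↔
        Sum.inl v ∈ (sirProc (helperAdj A) (liftCoins A ω) (2 * t)).1) ∧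
    (sirProc (helperAdj A) (liftCoins A ω) (2 * Fintype.card V)).1 = ∅ := by
  refine ⟨fun t v => ((helper_inv A ω t).1 v).symm, ?_⟩
  rw [Finset.eq_empty_iff_forall_notMem]
  intro x hx
  rcases x with v | e
  · have := ((helper_inv A ω (Fintype.card V)).1 v).1 hx
    rw [sir_terminates A ω] at this
    exact absurd this (Finset.notMem_empty v)
  · exact (helper_inv A ω (Fintype.card V)).2.1 e hx
end
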